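/- Let G = (V, E) be a finite tree with edge weights w : E → ℝ≥0, and let M be a matroid on V of rank k ≥ 1. Define I' = {X' ⊆ E : the vertex sets of the connected components of G − X' admit a transversal independent in M}. Then the minimum of Σ_{X ∈ P} d_w(X) over all feasible partitions P equals 2 · min{ Σ_{e ∈ X'} w(e) : X' ∈ I', |X'| = k − 1 }. -/

import Mathlib

open Finset

variable {V : Type*} [Fintype V] [DecidableEq V]

/-- `P` is a partition of the finite vertex set into nonempty parts. -/
def IsPartition (P : Finset (Finset V)) : Prop :=
  (∀ X ∈ P, X.Nonempty) ∧
  (∀ X ∈ P, ∀ Y ∈ P, X ≠ Y → Disjoint X Y) ∧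
  P.sup id = Finset.univ

/-- `P` is a feasible partition for the rank-`k` matroid given by `Indep`. -/
def Feasible (Indep : Finset V → Prop) (k : ℕ) (P : Finset (Finset V)) : Prop :=
  IsPartition P ∧ ∃ B : Finset V, Indep B ∧ B.card = k ∧ ∀ X ∈ P, (B ∩ X).card = 1

/-- `d_w(X)`: the total weight of edges of `G` with exactly one endpoint in `X`. -/
noncomputable def cutWeight (G : SimpleGraph V) [DecidableRel G.Adj] (w : Sym2 V → ℝ)
    (X : Finset V) : ℝ :=
  ∑ e ∈ G.edgeFinset, if ∃ u v : V, e = s(u, v) ∧ u ∈ X ∧ v ∉ X then w e else 0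

/-- `X'` is a set of edges of `G` such that the connected components of `G - X'`
admit a transversal that is independent in the matroid given by `Indep`. -/
def TreeCutIndep (Indep : Finset V → Prop) (G : SimpleGraph V)
    (X' : Finset (Sym2 V)) : Prop :=
  (X' : Set (Sym2 V)) ⊆ G.edgeSet ∧
  ∃ T : Finset V, Indep T ∧
    ∀ c : (G.deleteEdges (X' : Set (Sym2 V))).ConnectedComponent,
      ∃! v : V, v ∈ T ∧ (G.deleteEdges (X' : Set (Sym2 V))).connectedComponentMk v = c


/-!
Every edge joining two classes of a partition `P` is counted by exactly two of the cuts `d_w(X)`,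
so the cost of `P` is twice the weight of its crossing edges; and deleting `m` edges from a tree
leaves `m + 1` components.

Given `X' ∈ I'` with `|X'| = k - 1`, the `k` components of `G - X'` form a feasible partition whose
crossing edges are exactly `X'` (every tree edge is a bridge), so its cost is `2 w(X')`.

Given a feasible `P` with basis `B`, the crossing edges `F` separate the vertices of `B`. While
`G - F` has more components than `|B|`, one component avoids `B`; an edge of `F` leaving it can be
put back without joining two vertices of `B`. This ends with `k - 1` edges of `F` separating `B`, a member of
`I'` of weight at most `w(F)`, half the cost of `P`.
-/

namespace SimpleGraph

section

variable {V : Type*} {G H : SimpleGraph V} {a b x y : V}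

theorem Reachable.deleteEdges_singleton_or (h : H.Reachable x y) :
    (H.deleteEdges {s(a, b)}).Reachable x y ∨
      (H.deleteEdges {s(a, b)}).Reachable x a ∧ (H.deleteEdges {s(a, b)}).Reachable b y ∨
      (H.deleteEdges {s(a, b)}).Reachable x b ∧ (H.deleteEdges {s(a, b)}).Reachable a y := by
  obtain ⟨p⟩ := h
  induction p with
  | nil => exact .inl .rfl
  | @cons x c y hxc _ ih =>
    have hstep : (H.deleteEdges {s(a, b)}).Adj x c ∨ x = a ∧ c = b ∨ x = b ∧ c = a := by
      by_cases he : s(x, c) = s(a, b)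
      · exact .inr (Sym2.eq_iff.mp he)
      · exact .inl ((deleteEdges_adj ..).mpr ⟨hxc, he⟩)
    rcases hstep with hxc' | ⟨rfl, rfl⟩ | ⟨rfl, rfl⟩
    · exact ih.imp hxc'.reachable.trans
        (Or.imp (And.imp_left hxc'.reachable.trans) (And.imp_left hxc'.reachable.trans))
    · rcases ih with h | ⟨h₁, h₂⟩ | ⟨-, h₂⟩
      · exact .inr (.inl ⟨.rfl, h⟩)
      · exact .inl (h₁.symm.trans h₂)
      · exact .inl h₂
    · rcases ih with h | ⟨-, h₂⟩ | ⟨h₁, h₂⟩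
      · exact .inr (.inr ⟨.rfl, h⟩)
      · exact .inl h₂
      · exact .inl (h₁.symm.trans h₂)

theorem card_connectedComponent_deleteEdges_of_isBridge [Finite V] (hab : H.Adj a b)
    (hbr : H.IsBridge s(a, b)) :
    Nat.card (H.deleteEdges {s(a, b)}).ConnectedComponent = Nat.card H.ConnectedComponent + 1 := by
  set H' := H.deleteEdges {s(a, b)}
  let φ : H'.ConnectedComponent → H.ConnectedComponent :=
    ConnectedComponent.map (Hom.ofLE (deleteEdges_le _))
  have hφ (v : V) : φ (H'.connectedComponentMk v) = H.connectedComponentMk v := rfl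
  have hab' : H'.connectedComponentMk a ≠ H'.connectedComponentMk b :=
    fun h => hbr (ConnectedComponent.exact h)
  -- `φ` merges exactly the components of `a` and `b`
  have hbij : Set.BijOn φ {H'.connectedComponentMk b}ᶜ Set.univ := by
    refine ⟨fun _ _ => trivial, ?_, ?_⟩
    · intro c₁ hc₁ c₂ hc₂ hc
      induction c₁ using ConnectedComponent.ind with | h x => ?_
      induction c₂ using ConnectedComponent.ind with | h y => ?_
      simp only [Set.mem_compl_singleton_iff] at hc₁ hc₂
      rcases (ConnectedComponent.exact hc).deleteEdges_singleton_or (a := a) (b := b) with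
        h | ⟨-, h⟩ | ⟨h, -⟩
      · exact ConnectedComponent.sound h
      · exact absurd (ConnectedComponent.sound h.symm) hc₂
      · exact absurd (ConnectedComponent.sound h) hc₁
    · intro c _
      induction c using ConnectedComponent.ind with | h x => ?_
      by_cases hx : H'.connectedComponentMk x = H'.connectedComponentMk b
      · refine ⟨H'.connectedComponentMk a, hab', ?_⟩
        rw [hφ, ConnectedComponent.eq]
        exact hab.reachable.trans ((ConnectedComponent.exact hx).mono (deleteEdges_le _)).symm
      · exact ⟨_, hx, hφ x⟩
  have := Set.ncard_add_ncard_compl {H'.connectedComponentMk b}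
  rw [Set.ncard_singleton, hbij.ncard_eq, Set.ncard_univ] at this
  omega

theorem IsAcyclic.card_connectedComponent_deleteEdges [Finite V] (hG : G.IsAcyclic)
    {F : Finset (Sym2 V)} (hF : ↑F ⊆ G.edgeSet) :
    Nat.card (G.deleteEdges ↑F).ConnectedComponent = Nat.card G.ConnectedComponent + F.card := by
  classical
  induction F using Finset.induction_on with
  | empty => simp
  | @insert e F he ih =>
    rw [coe_insert, Set.insert_subset_iff] at hF
    have hdel : G.deleteEdges ↑(insert e F) = (G.deleteEdges ↑F).deleteEdges {e} := by
      rw [deleteEdges_deleteEdges, coe_insert, Set.union_comm, Set.insert_eq]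
    have heF : e ∈ (G.deleteEdges ↑F).edgeSet := by
      rw [edgeSet_deleteEdges]
      exact ⟨hF.1, he⟩
    induction e using Sym2.ind with | h a b => ?_
    have hadj : (G.deleteEdges ↑F).Adj a b := heF
    rw [hdel, card_connectedComponent_deleteEdges_of_isBridge hadj
      (isAcyclic_iff_forall_adj_isBridge.mp (hG.anti (deleteEdges_le _)) hadj),
      ih hF.2, card_insert_of_notMem he, add_assoc]

theorem IsTree.card_connectedComponent_deleteEdges [Finite V] (hG : G.IsTree)
    {F : Finset (Sym2 V)} (hF : ↑F ⊆ G.edgeSet) :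
    Nat.card (G.deleteEdges ↑F).ConnectedComponent = F.card + 1 := by
  have : Nonempty V := hG.connected.nonempty
  have : Subsingleton G.ConnectedComponent :=
    hG.connected.preconnected.subsingleton_connectedComponent
  rw [hG.isAcyclic.card_connectedComponent_deleteEdges hF, Nat.card_unique, add_comm]

theorem IsTree.image_connectedComponentMk_eq_univ_iff [Finite V] (hG : G.IsTree)
    {F : Finset (Sym2 V)} (hF : ↑F ⊆ G.edgeSet) {B : Finset V}
    (hinj : Set.InjOn (G.deleteEdges ↑F).connectedComponentMk ↑B) :
    (G.deleteEdges ↑F).connectedComponentMk '' ↑B = Set.univ ↔ B.card = F.card + 1 := by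
  rw [Set.eq_univ_iff_ncard, hinj.ncard_image, Set.ncard_coe_finset,
    hG.card_connectedComponent_deleteEdges hF]

theorem Preconnected.exists_injOn_deleteEdges_erase [DecidableEq V] (hG : G.Preconnected)
    {F : Finset (Sym2 V)} {B : Finset V} (hB : B.Nonempty)
    (hinj : Set.InjOn (G.deleteEdges ↑F).connectedComponentMk ↑B)
    (himage : (G.deleteEdges ↑F).connectedComponentMk '' ↑B ≠ Set.univ) :
    ∃ e ∈ F, Set.InjOn (G.deleteEdges ↑(F.erase e)).connectedComponentMk ↑B := by
  set H := G.deleteEdges ↑F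
  obtain ⟨c, hc⟩ := (Set.ne_univ_iff_exists_notMem _).mp himage
  obtain ⟨b₀, hb₀⟩ := hB
  obtain ⟨p⟩ := hG c.out b₀
  obtain ⟨d, -, hd₁, hd₂⟩ := p.exists_boundary_dart {v | H.connectedComponentMk v = c}
    c.out_eq fun h => hc ⟨b₀, hb₀, h⟩
  have hdF : d.edge ∈ F := by
    by_contra h
    exact hd₂ ((ConnectedComponent.connectedComponentMk_eq_of_adj
      ((deleteEdges_adj ..).mpr ⟨d.adj, h⟩)).symm.trans hd₁)
  have hdel : (G.deleteEdges ↑(F.erase d.edge)).deleteEdges {d.edge} = H := by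
    rw [deleteEdges_deleteEdges, coe_erase, Set.sdiff_union_self,
      Set.union_eq_left.mpr (Set.singleton_subset_iff.mpr hdF)]
  refine ⟨d.edge, hdF, fun b₁ hb₁ b₂ hb₂ h => ?_⟩
  -- the restored edge leaves `c`, which contains no vertex of `B`
  have := (ConnectedComponent.exact h).deleteEdges_singleton_or (a := d.fst) (b := d.snd)
  rw [show s(d.fst, d.snd) = d.edge from rfl, hdel] at this
  rcases this with h | ⟨h, -⟩ | ⟨-, h⟩
  · exact hinj hb₁ hb₂ (ConnectedComponent.sound h)
  · exact absurd ⟨b₁, hb₁, (ConnectedComponent.sound h).trans hd₁⟩ hc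
  · exact absurd ⟨b₂, hb₂, (ConnectedComponent.sound h.symm).trans hd₁⟩ hc

theorem IsTree.exists_subset_card_add_one_eq_injOn [Finite V] [DecidableEq V] (hG : G.IsTree)
    {F : Finset (Sym2 V)} (hF : ↑F ⊆ G.edgeSet) {B : Finset V} (hB : B.Nonempty)
    (hinj : Set.InjOn (G.deleteEdges ↑F).connectedComponentMk ↑B) :
    ∃ F' ⊆ F, F'.card + 1 = B.card ∧
      Set.InjOn (G.deleteEdges ↑F').connectedComponentMk ↑B := by
  induction F using Finset.strongInduction with | H F ih => ?_
  by_cases hcard : B.card = F.card + 1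
  · exact ⟨F, subset_rfl, hcard.symm, hinj⟩
  obtain ⟨e, he, hinj'⟩ := hG.connected.preconnected.exists_injOn_deleteEdges_erase hB hinj
    ((hG.image_connectedComponentMk_eq_univ_iff hF hinj).not.mpr hcard)
  obtain ⟨F', hF', hcard', hinj''⟩ :=
    ih _ (erase_ssubset he) ((coe_erase e F ▸ Set.sdiff_subset).trans hF) hinj'
  exact ⟨F', hF'.trans (erase_subset e F), hcard', hinj''⟩

theorem IsTree.treeCutIndep_of_injOn [Finite V] {Indep : Finset V → Prop} (hG : G.IsTree)
    {X' : Finset (Sym2 V)} (hX' : ↑X' ⊆ G.edgeSet) {B : Finset V} (hB : Indep B)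
    (hcard : B.card = X'.card + 1)
    (hinj : Set.InjOn (G.deleteEdges ↑X').connectedComponentMk ↑B) : TreeCutIndep Indep G X' := by
  refine ⟨hX', B, hB, fun c => ?_⟩
  obtain ⟨b, hb, rfl⟩ :=
    ((hG.image_connectedComponentMk_eq_univ_iff hX' hinj).mpr hcard).symm ▸ Set.mem_univ c
  exact ⟨b, ⟨hb, rfl⟩, fun b' ⟨hb', h⟩ => hinj hb' hb h⟩

end

end SimpleGraph

theorem Sym2.exists_eq_mk_mem_notMem_iff_xor {α : Type*} {X : Finset α} {a b : α} :
    (∃ u v, s(a, b) = s(u, v) ∧ u ∈ X ∧ v ∉ X) ↔ Xor (a ∈ X) (b ∈ X) := by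
  constructor
  · rintro ⟨u, v, h, hu, hv⟩
    rcases Sym2.eq_iff.mp h with ⟨rfl, rfl⟩ | ⟨rfl, rfl⟩
    exacts [.inl ⟨hu, hv⟩, .inr ⟨hu, hv⟩]
  · rintro (⟨ha, hb⟩ | ⟨hb, ha⟩)
    exacts [⟨a, b, rfl, ha, hb⟩, ⟨b, a, Sym2.eq_swap, hb, ha⟩]

namespace IsPartition

variable {P : Finset (Finset V)}

theorem exists_mem (hP : IsPartition P) (v : V) : ∃ X ∈ P, v ∈ X := by
  have hv := mem_univ v
  rw [← hP.2.2, mem_sup] at hv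
  simpa using hv

theorem eq_of_mem_of_mem (hP : IsPartition P) {X Y : Finset V} {v : V} (hX : X ∈ P) (hY : Y ∈ P)
    (hvX : v ∈ X) (hvY : v ∈ Y) : X = Y :=
  by_contra fun hne => disjoint_left.mp (hP.2.1 X hX Y hY hne) hvX hvY

theorem sum_ite_xor (hP : IsPartition P) (a b : V) (r : ℝ) :
    ∑ X ∈ P, (if Xor (a ∈ X) (b ∈ X) then r else 0) =
      2 * if ∃ X ∈ P, Xor (a ∈ X) (b ∈ X) then r else 0 := by
  obtain ⟨Xa, hXa, haXa⟩ := hP.exists_mem a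
  obtain ⟨Xb, hXb, hbXb⟩ := hP.exists_mem b
  have hxor : ∀ X ∈ P, Xor (a ∈ X) (b ∈ X) ↔ Xa ≠ Xb ∧ (X = Xa ∨ X = Xb) := by
    intro X hX
    have := fun v => hP.eq_of_mem_of_mem (v := v) hX hXa
    have := fun v => hP.eq_of_mem_of_mem (v := v) hX hXb
    have := fun v => hP.eq_of_mem_of_mem (v := v) hXa hXb
    grind
  by_cases hab : Xa = Xb
  · have hxor' (X) (hX : X ∈ P) : ¬ Xor (a ∈ X) (b ∈ X) := fun h => ((hxor X hX).mp h).1 hab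
    rw [if_neg (by simpa using hxor'), sum_eq_zero fun X hX => if_neg (hxor' X hX), mul_zero]
  · have hsub : {Xa, Xb} ⊆ P := insert_subset hXa (singleton_subset_iff.mpr hXb)
    rw [if_pos ⟨Xa, hXa, (hxor Xa hXa).mpr ⟨hab, .inl rfl⟩⟩, ← sum_subset hsub, sum_pair hab,
      if_pos ((hxor Xa hXa).mpr ⟨hab, .inl rfl⟩), if_pos ((hxor Xb hXb).mpr ⟨hab, .inr rfl⟩),
      two_mul]
    intro X hX hX'
    rw [if_neg fun h => hX' (by simpa using ((hxor X hX).mp h).2)]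

end IsPartition

open Classical in
noncomputable def crossingEdges (G : SimpleGraph V) [DecidableRel G.Adj] (P : Finset (Finset V)) :
    Finset (Sym2 V) :=
  {e ∈ G.edgeFinset | ∃ X ∈ P, ∃ u v, e = s(u, v) ∧ u ∈ X ∧ v ∉ X}

section crossingEdges

variable (G : SimpleGraph V) [DecidableRel G.Adj] {P : Finset (Finset V)}

theorem crossingEdges_subset_edgeSet : ↑(crossingEdges G P) ⊆ G.edgeSet := fun _ he =>
  G.mem_edgeFinset.mp (mem_filter.mp he).1

theorem IsPartition.sum_cutWeight (hP : IsPartition P) (w : Sym2 V → ℝ) :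
    ∑ X ∈ P, cutWeight G w X = 2 * ∑ e ∈ crossingEdges G P, w e := by
  classical
  simp only [cutWeight, crossingEdges, sum_filter, mul_sum]
  rw [sum_comm]
  refine sum_congr rfl fun e _ => ?_
  induction e using Sym2.ind with | h a b => ?_
  simp only [Sym2.exists_eq_mk_mem_notMem_iff_xor]
  exact hP.sum_ite_xor a b _

variable {G}

theorem mem_of_reachable_deleteEdges_crossingEdges {X : Finset V} (hX : X ∈ P) {x y : V}
    (h : (G.deleteEdges ↑(crossingEdges G P)).Reachable x y) (hx : x ∈ X) : y ∈ X := by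
  obtain ⟨p⟩ := h
  induction p with
  | nil => exact hx
  | @cons x c y hadj _ ih =>
    refine ih (not_not.mp fun hc => ((G.deleteEdges_adj ..).mp hadj).2 ?_)
    exact mem_filter.mpr ⟨G.mem_edgeFinset.mpr ((G.deleteEdges_adj ..).mp hadj).1, X, hX,
      x, c, rfl, hx, hc⟩

theorem IsPartition.injOn_deleteEdges_crossingEdges (hP : IsPartition P) {B : Finset V}
    (hB : ∀ X ∈ P, (B ∩ X).card = 1) :
    Set.InjOn (G.deleteEdges ↑(crossingEdges G P)).connectedComponentMk ↑B := by
  intro b₁ hb₁ b₂ hb₂ h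
  obtain ⟨X, hX, hb₁X⟩ := hP.exists_mem b₁
  have hb₂X :=
    mem_of_reachable_deleteEdges_crossingEdges hX (SimpleGraph.ConnectedComponent.exact h) hb₁X
  exact card_le_one.mp (hB X hX).le b₁ (mem_inter.mpr ⟨hb₁, hb₁X⟩) b₂
    (mem_inter.mpr ⟨hb₂, hb₂X⟩)

end crossingEdges

open Classical in
noncomputable def componentPartition (H : SimpleGraph V) : Finset (Finset V) :=
  univ.image fun v => univ.filter (H.Reachable · v)

section componentPartition

variable (H : SimpleGraph V)

theorem mem_componentPartition {X : Finset V} :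
    X ∈ componentPartition H ↔ ∃ v, ∀ u, u ∈ X ↔ H.Reachable u v := by
  classical
  simp only [componentPartition, mem_image, mem_univ, true_and, Finset.ext_iff, mem_filter]
  exact exists_congr fun v => forall_congr' fun u => Iff.comm

theorem exists_mem_componentPartition (v : V) :
    ∃ X ∈ componentPartition H, ∀ u, u ∈ X ↔ H.Reachable u v := by
  classical
  exact ⟨_, mem_image_of_mem _ (mem_univ v), fun u => by simp⟩

theorem isPartition_componentPartition : IsPartition (componentPartition H) := by
  refine ⟨?_, ?_, eq_univ_of_forall fun v => ?_⟩
  · rintro X hX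
    obtain ⟨v, hX⟩ := (mem_componentPartition H).mp hX
    exact ⟨v, (hX v).mpr .rfl⟩
  · rintro X hX Y hY hXY
    obtain ⟨v, hX⟩ := (mem_componentPartition H).mp hX
    obtain ⟨w, hY⟩ := (mem_componentPartition H).mp hY
    refine disjoint_left.mpr fun u huX huY => hXY (Finset.ext fun z => ?_)
    have hvw := ((hX u).mp huX).symm.trans ((hY u).mp huY)
    rw [hX, hY]
    exact ⟨(·.trans hvw), (·.trans hvw.symm)⟩
  · obtain ⟨X, hX, hvX⟩ := exists_mem_componentPartition H v
    exact mem_sup.mpr ⟨X, hX, (hvX v).mpr .rfl⟩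

theorem mk_mem_crossingEdges_componentPartition (G : SimpleGraph V) [DecidableRel G.Adj]
    {a b : V} :
    s(a, b) ∈ crossingEdges G (componentPartition H) ↔ G.Adj a b ∧ ¬ H.Reachable a b := by
  simp only [crossingEdges, mem_filter, SimpleGraph.mem_edgeFinset, SimpleGraph.mem_edgeSet,
    Sym2.exists_eq_mk_mem_notMem_iff_xor]
  refine and_congr_right fun _ => ⟨?_, fun hab => ?_⟩
  · rintro ⟨X, hX, hxor⟩ hab
    obtain ⟨v, hX⟩ := (mem_componentPartition H).mp hX
    rw [hX, hX] at hxor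
    exact hxor.elim (fun h => h.2 (hab.symm.trans h.1)) (fun h => h.2 (hab.trans h.1))
  · obtain ⟨X, hX, hvX⟩ := exists_mem_componentPartition H a
    exact ⟨X, hX, .inl ⟨(hvX a).mpr .rfl, fun hb => hab ((hvX b).mp hb).symm⟩⟩

theorem card_inter_eq_one_of_existsUnique {T : Finset V}
    (hT : ∀ c : H.ConnectedComponent, ∃! v, v ∈ T ∧ H.connectedComponentMk v = c)
    {X : Finset V} (hX : X ∈ componentPartition H) : (T ∩ X).card = 1 := by
  obtain ⟨v, hX⟩ := (mem_componentPartition H).mp hX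
  obtain ⟨t, ht, huniq⟩ := hT (H.connectedComponentMk v)
  refine card_eq_one.mpr ⟨t, Finset.ext fun u => ?_⟩
  rw [mem_inter, hX, mem_singleton, ← SimpleGraph.ConnectedComponent.eq]
  exact ⟨huniq u, fun h => h ▸ ht⟩

end componentPartition

theorem SimpleGraph.IsAcyclic.crossingEdges_componentPartition_deleteEdges
    {G : SimpleGraph V} [DecidableRel G.Adj] (hG : G.IsAcyclic) {S : Finset (Sym2 V)}
    (hS : ↑S ⊆ G.edgeSet) : crossingEdges G (componentPartition (G.deleteEdges ↑S)) = S := by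
  ext e
  induction e using Sym2.ind with | h a b => ?_
  rw [mk_mem_crossingEdges_componentPartition]
  constructor
  · rintro ⟨hab, hnr⟩
    by_contra he
    exact hnr ((SimpleGraph.deleteEdges_adj ..).mpr ⟨hab, he⟩).reachable
  · intro he
    have hab : G.Adj a b := hS he
    exact ⟨hab, fun h => SimpleGraph.isAcyclic_iff_forall_adj_isBridge.mp hG hab
      (h.mono (SimpleGraph.deleteEdges_anti (Set.singleton_subset_iff.mpr he)))⟩

section TreeCutIndep

variable {G : SimpleGraph V} [DecidableRel G.Adj] {Indep : Finset V → Prop} {k : ℕ}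

theorem Feasible.exists_treeCutIndep (hG : G.IsTree) {w : Sym2 V → ℝ} (hw : ∀ e, 0 ≤ w e)
    (hk : 1 ≤ k) {P : Finset (Finset V)} (hP : Feasible Indep k P) :
    ∃ X', TreeCutIndep Indep G X' ∧ X'.card = k - 1 ∧
      2 * ∑ e ∈ X', w e ≤ ∑ X ∈ P, cutWeight G w X := by
  obtain ⟨hP, B, hB, hBk, hBP⟩ := hP
  obtain ⟨X', hX'F, hX'card, hinj⟩ := hG.exists_subset_card_add_one_eq_injOn
    (crossingEdges_subset_edgeSet G) (card_pos.mp (hBk ▸ hk))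
    (hP.injOn_deleteEdges_crossingEdges hBP)
  refine ⟨X', hG.treeCutIndep_of_injOn ((coe_subset.mpr hX'F).trans
    (crossingEdges_subset_edgeSet G)) hB hX'card.symm hinj, by omega, ?_⟩
  rw [hP.sum_cutWeight G w]
  gcongr
  exact fun e _ _ => hw e

theorem TreeCutIndep.exists_feasible (hG : G.IsTree) (w : Sym2 V → ℝ) (hk : 1 ≤ k)
    {X' : Finset (Sym2 V)} (hX' : TreeCutIndep Indep G X') (hcard : X'.card = k - 1) :
    ∃ P, Feasible Indep k P ∧ ∑ X ∈ P, cutWeight G w X = 2 * ∑ e ∈ X', w e := by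
  obtain ⟨hX'E, T, hT, huniq⟩ := hX'
  set H := G.deleteEdges ↑X'
  have hinj : Set.InjOn H.connectedComponentMk ↑T :=
    fun t ht t' ht' h => (huniq _).unique ⟨ht, h⟩ ⟨ht', rfl⟩
  have himage : H.connectedComponentMk '' ↑T = Set.univ := Set.eq_univ_of_forall fun c =>
    let ⟨t, ⟨ht, htc⟩, _⟩ := huniq c; ⟨t, ht, htc⟩
  have hTk : T.card = k := by
    have := (hG.image_connectedComponentMk_eq_univ_iff hX'E hinj).mp himage
    omega
  refine ⟨componentPartition H, ⟨isPartition_componentPartition H, T, hT, hTk,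
    fun X hX => card_inter_eq_one_of_existsUnique H huniq hX⟩, ?_⟩
  rw [(isPartition_componentPartition H).sum_cutWeight G w,
    hG.isAcyclic.crossingEdges_componentPartition_deleteEdges hX'E]

end TreeCutIndep

theorem tree_mc_multiway_cut_eq_min_weight_basis_general
    (G : SimpleGraph V) [DecidableRel G.Adj] (hG : G.IsTree)
    (w : Sym2 V → ℝ) (hw : ∀ e, 0 ≤ w e)
    (Indep : Finset V → Prop) (k : ℕ) (hk : 1 ≤ k) :
    sInf {c : ℝ | ∃ P : Finset (Finset V), Feasible Indep k P ∧
        c = ∑ X ∈ P, cutWeight G w X} =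
      2 * sInf {c : ℝ | ∃ X' : Finset (Sym2 V), TreeCutIndep Indep G X' ∧
        X'.card = k - 1 ∧ c = ∑ e ∈ X', w e} := by
  rw [← smul_eq_mul, ← Real.sInf_smul_of_nonneg zero_le_two]
  apply csInf_eq_csInf_of_forall_exists_le
  · rintro _ ⟨P, hP, rfl⟩
    obtain ⟨X', hX', hcard, hle⟩ := hP.exists_treeCutIndep hG hw hk
    exact ⟨_, Set.smul_mem_smul_set ⟨X', hX', hcard, rfl⟩, hle⟩
  · rintro _ ⟨_, ⟨X', hX', hcard, rfl⟩, rfl⟩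
    obtain ⟨P, hP, hsum⟩ := hX'.exists_feasible hG w hk hcard
    exact ⟨_, ⟨P, hP, rfl⟩, hsum.le⟩

/-- on a tree, the minimum cost of a feasible partition equals twice the
minimum weight of a member of `I'` of size `k - 1`. -/
theorem tree_mc_multiway_cut_eq_min_weight_basis
    (G : SimpleGraph V) [DecidableRel G.Adj] (hG : G.IsTree)
    (w : Sym2 V → ℝ) (hw : ∀ e, 0 ≤ w e)
    (Indep : Finset V → Prop) (k : ℕ) (hk : 1 ≤ k)
    (h_empty : Indep ∅)
    (h_subset : ∀ ⦃I J : Finset V⦄, Indep J → I ⊆ J → Indep I)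
    (h_exchange : ∀ ⦃I J : Finset V⦄, Indep I → Indep J → I.card < J.card →
      ∃ e ∈ J \ I, Indep (insert e I))
    (h_rank_le : ∀ I : Finset V, Indep I → I.card ≤ k)
    (h_rank_eq : ∃ B : Finset V, Indep B ∧ B.card = k) :
    sInf {c : ℝ | ∃ P : Finset (Finset V), Feasible Indep k P ∧
        c = ∑ X ∈ P, cutWeight G w X} =
      2 * sInf {c : ℝ | ∃ X' : Finset (Sym2 V), TreeCutIndep Indep G X' ∧
        X'.card = k - 1 ∧ c = ∑ e ∈ X', w e} :=
  tree_mc_multiway_cut_eq_min_weight_basis_general G hG w hw Indep k hk
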